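/- arXiv:2202.00835 — 2 statements merged into one kernel-verified Lean document; each statement's English description precedes it below -/
import Mathlib

section
/- For a nonzero composition α with N(α) = max{α_i + i : α_i ≠ 0}, the index j = N(α) + 1 is the smallest j such that c_{i,j}(α) = α_i for every i. -/
/-- The matrix `c_{i,j}(α)` defined recursively in `j`. -/
def cmat (α : ℕ → ℕ) (i : ℕ) : ℕ → ℕ
  | 0 => 0
  | j + 1 =>
    if j + 1 ≤ i + 1 then 0
    else cmat α i j + if α j < α i - cmat α i j then 1 else 0

/-- `α` covers `α'` in position `(i,j)`: conditions (a1)–(a4). -/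
def CoversAt (α α' : ℕ → ℕ) (i j : ℕ) : Prop :=
  1 ≤ i ∧ i < j ∧
  α' i + 1 ≤ α i ∧
  α' j + α' i + 1 = α j + α i ∧
  (∀ k, k ≠ i → k ≠ j → α' k = α k) ∧
  cmat α i j = cmat α' i j ∧
  cmat α i j + α j = α' i

/-- `N(α) = max { α_i + i : α_i ≠ 0 }`. -/
noncomputable def Nval (α : ℕ → ℕ) : ℕ :=
  sSup {m | ∃ i, α i ≠ 0 ∧ α i + i = m}

/-!
Track the deficit `α i - c_{i,j}(α)`. When the counter does not advance at step `j`, the entry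
`α j` is at least the current deficit, hence nonzero, so `α j + j ≤ N(α)`; when it does advance
the deficit drops by one. Either way `α i - c_{i,j}(α) ≤ N(α) + 1 - j` for every `j`, which
forces `c_{i,j}(α) = α i` once `j = N(α) + 1`. Conversely `c_{i,j}(α) ≤ j - i - 1`, and at an
index `i` realising the maximum `α i + i = N(α)` this gives `j ≥ N(α) + 1`.
-/

section cmat

variable (α : ℕ → ℕ) (i : ℕ)

lemma cmat_succ_of_lt {j : ℕ} (h : i < j) :
    cmat α i (j + 1) = cmat α i j + if α j < α i - cmat α i j then 1 else 0 := by
  rw [cmat, if_neg (by omega)]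

lemma cmat_succ_of_le {j : ℕ} (h : j ≤ i) : cmat α i (j + 1) = 0 := by
  rw [cmat, if_pos (by omega)]

lemma cmat_le_self : ∀ j, cmat α i j ≤ α i
  | 0 => Nat.zero_le _
  | j + 1 => by
    rcases le_or_gt j i with h | h
    · simp [cmat_succ_of_le α i h]
    · have := cmat_le_self j
      rw [cmat_succ_of_lt α i h]
      split <;> omega

lemma cmat_le_sub : ∀ j, cmat α i j ≤ j - (i + 1)
  | 0 => Nat.zero_le _
  | j + 1 => by
    rcases le_or_gt j i with h | h
    · simp [cmat_succ_of_le α i h]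
    · have := cmat_le_sub j
      rw [cmat_succ_of_lt α i h]
      split <;> omega

lemma add_lt_of_cmat_eq {j : ℕ} (hi : α i ≠ 0) (h : cmat α i j = α i) : α i + i < j := by
  have := cmat_le_sub α i j
  omega

variable {α} {N : ℕ} (hN : ∀ k, α k ≠ 0 → α k + k ≤ N)
include hN

lemma sub_cmat_le : ∀ j, α i - cmat α i j ≤ N + 1 - j
  | 0 => by
    have := hN i
    omega
  | j + 1 => by
    have hi := hN i
    rcases le_or_gt j i with h | h
    · rw [cmat_succ_of_le α i h]
      omega
    · have ih := sub_cmat_le j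
      have hj := hN j
      rw [cmat_succ_of_lt α i h]
      split <;> omega

lemma cmat_eq_of_le {j : ℕ} (hj : N + 1 ≤ j) : cmat α i j = α i := by
  have := sub_cmat_le i hN j
  have := cmat_le_self α i j
  omega

end cmat

section Nval

variable {α : ℕ → ℕ}

lemma bddAbove_Nval_set (hbd : ∃ m, ∀ k, m < k → α k = 0) :
    BddAbove {m | ∃ i, α i ≠ 0 ∧ α i + i = m} := by
  obtain ⟨m, hm⟩ := hbd
  have hfin : {i | α i ≠ 0}.Finite :=
    (Set.finite_Iic m).subset fun k hk => not_lt.mp fun hmk => hk (hm k hmk)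
  exact (hfin.image fun i => α i + i).bddAbove

lemma le_Nval (hbd : ∃ m, ∀ k, m < k → α k = 0) {k : ℕ} (hk : α k ≠ 0) : α k + k ≤ Nval α :=
  le_csSup (bddAbove_Nval_set hbd) ⟨k, hk, rfl⟩

lemma exists_add_eq_Nval (hne : ∃ i, α i ≠ 0) (hbd : ∃ m, ∀ k, m < k → α k = 0) :
    ∃ i, α i ≠ 0 ∧ α i + i = Nval α := by
  obtain ⟨i, hi⟩ := hne
  exact Nat.sSup_mem (s := {m | ∃ i, α i ≠ 0 ∧ α i + i = m}) ⟨α i + i, i, hi, rfl⟩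
    (bddAbove_Nval_set hbd)

end Nval

/-- `N(α) + 1` is the smallest index `j` such that
`c_{i,j}(α) = α_i` for every `i`. -/
theorem cmat_stabilizes_at_N (α : ℕ → ℕ) (hne : ∃ i, α i ≠ 0)
    (hbd : ∃ m, ∀ k, m < k → α k = 0) :
    (∀ i, cmat α i (Nval α + 1) = α i) ∧
    (∀ j, (∀ i, cmat α i j = α i) → Nval α + 1 ≤ j) := by
  refine ⟨fun i => cmat_eq_of_le i (fun k => le_Nval hbd) le_rfl, fun j hj => ?_⟩
  obtain ⟨i, hi, hmax⟩ := exists_add_eq_Nval hne hbd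
  exact hmax ▸ add_lt_of_cmat_eq α i hi (hj i)
end

section
/- Let α and α̃ be compositions with α̃_i ≤ α_i and suppose there exists l > i such that α̃_k ≥ α_k for every k in [i+1, l]. Then c_{i,k}(α̃) ≤ c_{i,k}(α) for every k in [i+1, l+1]. -/
theorem cmat_of_le_succ (α : ℕ → ℕ) {i j : ℕ} (hj : j ≤ i + 1) : cmat α i j = 0 := by
  cases j with
  | zero => rfl
  | succ j => rw [cmat, if_pos hj]

theorem cmat_succ (α : ℕ → ℕ) {i j : ℕ} (hj : i + 1 ≤ j) :
    cmat α i (j + 1) = cmat α i j + if α j < α i - cmat α i j then 1 else 0 := by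
  rw [cmat, if_neg (by omega)]

/-- If `c' < c`, an increment of one keeps `c'` below `c`; if `c' = c`, the condition
firing on the left forces it on the right. -/
theorem add_ite_lt_sub_le {a a' b b' c c' : ℕ} (ha : a ≤ a') (hb : b' ≤ b) (hc : c' ≤ c) :
    (c' + if a' < b' - c' then 1 else 0) ≤ c + if a < b - c then 1 else 0 := by
  split_ifs <;> omega

theorem cmat_compare_general (α αt : ℕ → ℕ) (i l : ℕ) (hi : αt i ≤ α i)
    (h : ∀ k, i + 1 ≤ k → k ≤ l → α k ≤ αt k) :
    ∀ k, i + 1 ≤ k → k ≤ l + 1 → cmat αt i k ≤ cmat α i k := by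
  intro k hk
  induction k, hk using Nat.le_induction with
  | base => simp [cmat_of_le_succ]
  | succ k hk ih =>
    intro hkl
    rw [cmat_succ αt hk, cmat_succ α hk]
    exact add_ite_lt_sub_le (h k hk (by omega)) hi (ih (by omega))

/-- Lemma on comparison of compositions. -/
theorem cmat_compare (α αt : ℕ → ℕ) (i l : ℕ) (hi : αt i ≤ α i) (hl : i < l)
    (h : ∀ k, i + 1 ≤ k → k ≤ l → α k ≤ αt k) :
    ∀ k, i + 1 ≤ k → k ≤ l + 1 → cmat αt i k ≤ cmat α i k :=
  cmat_compare_general α αt i l hi h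
end
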